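/- Let n ≥ 2 and let a_1, …, a_n be complex numbers with ∏_{i=1}^n a_i = 1, and let p(X) = ∏_{i=1}^n (X − a_i) = Σ_{j=0}^n (−1)^j s_j X^{n−j}. Define the length L(p) = Σ_{j=0}^n |s_j|. Then 2·√(2/n)·max{0, log(2^{−n}·L(p))} ≤ ℓ(p) ≤ 2·log(L(p)). -/

import Mathlib

/-!
Put `xᵢ = log ‖aᵢ‖`; since `∏ aᵢ = 1` these sum to zero, so `∑ |xᵢ| = 2 ∑ log⁺ ‖aᵢ‖ = 2 log M(p)`,
with `M(p) = ∏ max 1 ‖aᵢ‖` the Mahler measure. A zero-sum vector has `2 |xᵢ| ≤ ∑ |xⱼ|`, whence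
`ℓ(p) = √(∑ 2 xᵢ²) ≤ ∑ |xᵢ|`, and Cauchy–Schwarz gives `√(2/n) ∑ |xᵢ| ≤ ℓ(p)`. Finally
`M(p) ≤ L(p) ≤ 2ⁿ M(p)`, the second inequality from `‖coeff j‖ ≤ C(n, j) M(p)`.
-/

open Polynomial Finset Real

namespace Polynomial

theorem mahlerMeasure_le_sum_range_norm_coeff (p : ℂ[X]) :
    p.mahlerMeasure ≤ ∑ j ∈ range (p.natDegree + 1), ‖p.coeff j‖ := by
  simpa only [sum_over_range p (f := fun _ a ↦ ‖a‖) (fun _ ↦ norm_zero)] using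
    mahlerMeasure_le_sum_norm_coeff p

theorem sum_range_norm_coeff_le_two_pow_mul_mahlerMeasure (p : ℂ[X]) :
    ∑ j ∈ range (p.natDegree + 1), ‖p.coeff j‖ ≤ 2 ^ p.natDegree * p.mahlerMeasure :=
  calc ∑ j ∈ range (p.natDegree + 1), ‖p.coeff j‖
      ≤ ∑ j ∈ range (p.natDegree + 1), (p.natDegree.choose j : ℝ) * p.mahlerMeasure :=
        sum_le_sum fun j _ ↦ norm_coeff_le_choose_mul_mahlerMeasure j p
    _ = 2 ^ p.natDegree * p.mahlerMeasure := by
        rw [← sum_mul, ← Nat.cast_sum, Nat.sum_range_choose, Nat.cast_pow, Nat.cast_ofNat]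

theorem mahlerMeasure_prod_X_sub_C {ι : Type*} (s : Finset ι) (a : ι → ℂ) :
    (∏ i ∈ s, (X - C (a i))).mahlerMeasure = ∏ i ∈ s, max 1 ‖a i‖ := by
  induction s using Finset.cons_induction with
  | empty => simp
  | cons i s hi ih => rw [prod_cons, prod_cons, mahlerMeasure_mul, mahlerMeasure_X_sub_C, ih]

theorem log_mahlerMeasure_prod_X_sub_C {ι : Type*} (s : Finset ι) (a : ι → ℂ) :
    log (∏ i ∈ s, (X - C (a i))).mahlerMeasure = ∑ i ∈ s, log⁺ ‖a i‖ := by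
  rw [mahlerMeasure_prod_X_sub_C, log_prod fun i _ ↦ by positivity]
  exact sum_congr rfl fun i _ ↦ (posLog_eq_log_max_one (norm_nonneg _)).symm

end Polynomial

theorem sum_log_norm_eq_zero_of_prod_eq_one {ι : Type*} {s : Finset ι} {a : ι → ℂ}
    (ha : ∏ i ∈ s, a i = 1) : ∑ i ∈ s, log ‖a i‖ = 0 := by
  have ha0 : ∀ i ∈ s, ‖a i‖ ≠ 0 := fun i hi ↦
    norm_ne_zero_iff.mpr (prod_ne_zero_iff.mp (ha ▸ one_ne_zero) i hi)
  rw [← log_prod ha0, ← norm_prod, ha, norm_one, log_one]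

section ZeroSum

variable {ι : Type*} {s : Finset ι} {x : ι → ℝ}

theorem sum_abs_eq_two_mul_sum_max_zero (hx : ∑ i ∈ s, x i = 0) :
    ∑ i ∈ s, |x i| = 2 * ∑ i ∈ s, max 0 (x i) := by
  have h : ∀ i ∈ s, |x i| = 2 * max 0 (x i) - x i := fun i _ ↦ by
    rcases le_total (x i) 0 with h | h
    · rw [abs_of_nonpos h, max_eq_left h]; ring
    · rw [abs_of_nonneg h, max_eq_right h]; ring
  rw [sum_congr rfl h, sum_sub_distrib, ← mul_sum, hx, sub_zero]

theorem two_mul_abs_le_sum_abs (hx : ∑ i ∈ s, x i = 0) {i : ι} (hi : i ∈ s) :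
    2 * |x i| ≤ ∑ j ∈ s, |x j| := by
  classical
  have hrest : |x i| ≤ ∑ j ∈ s.erase i, |x j| := by
    have : x i = -∑ j ∈ s.erase i, x j := by
      linarith [add_sum_erase s x hi]
    rw [this, abs_neg]
    exact abs_sum_le_sum_abs _ _
  linarith [add_sum_erase s (fun j ↦ |x j|) hi]

theorem two_mul_sum_sq_le_sq_sum_abs (hx : ∑ i ∈ s, x i = 0) :
    2 * ∑ i ∈ s, x i ^ 2 ≤ (∑ i ∈ s, |x i|) ^ 2 :=
  calc 2 * ∑ i ∈ s, x i ^ 2 = ∑ i ∈ s, |x i| * (2 * |x i|) := by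
        rw [mul_sum]; exact sum_congr rfl fun i _ ↦ by rw [← sq_abs]; ring
    _ ≤ ∑ i ∈ s, |x i| * ∑ j ∈ s, |x j| :=
        sum_le_sum fun i hi ↦ mul_le_mul_of_nonneg_left (two_mul_abs_le_sum_abs hx hi)
          (abs_nonneg _)
    _ = (∑ i ∈ s, |x i|) ^ 2 := by rw [← sum_mul, sq]

end ZeroSum

section Fintype

variable {ι : Type*} [Fintype ι] {x : ι → ℝ}

theorem sqrt_sum_two_mul_sq_le_sum_abs (hx : ∑ i, x i = 0) :
    √(∑ i, 2 * x i ^ 2) ≤ ∑ i, |x i| := by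
  rw [← mul_sum]
  exact sqrt_le_iff.mpr ⟨sum_nonneg fun i _ ↦ abs_nonneg _, two_mul_sum_sq_le_sq_sum_abs hx⟩

theorem sqrt_two_div_card_mul_sum_abs_le :
    √(2 / Fintype.card ι) * ∑ i, |x i| ≤ √(∑ i, 2 * x i ^ 2) := by
  have hT : 0 ≤ ∑ i, |x i| := sum_nonneg fun i _ ↦ abs_nonneg _
  rw [← sqrt_sq hT, ← sqrt_mul (by positivity), ← mul_sum]
  refine sqrt_le_sqrt ?_
  rcases (Fintype.card ι).eq_zero_or_pos with h | h
  · simp [h, sum_nonneg fun i _ ↦ sq_nonneg (x i)]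
  have hCS := sq_sum_le_card_mul_sum_sq (s := univ) (f := fun i ↦ |x i|)
  simp only [sq_abs, card_univ] at hCS
  rw [div_mul_eq_mul_div, div_le_iff₀ (by positivity)]
  nlinarith

end Fintype

theorem stmt_10_general (n : ℕ) (a : Fin n → ℂ) (ha : ∏ i, a i = 1) :
    2 * Real.sqrt (2 / n) *
      max 0 (Real.log (((2 : ℝ) ^ n)⁻¹ *
        ∑ j ∈ Finset.range (n + 1),
          ‖(∏ i, (X - C (a i))).coeff j‖)) ≤
      Real.sqrt (∑ i, 2 * (Real.log (‖a i‖)) ^ 2) ∧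
    Real.sqrt (∑ i, 2 * (Real.log (‖a i‖)) ^ 2) ≤
      2 * Real.log (∑ j ∈ Finset.range (n + 1),
        ‖(∏ i, (X - C (a i))).coeff j‖) := by
  set p := ∏ i, (X - C (a i))
  have hdeg : p.natDegree = n := by simp [p]
  have hsum := sum_log_norm_eq_zero_of_prod_eq_one ha
  set L := ∑ j ∈ range (n + 1), ‖p.coeff j‖
  have hM1 : 1 ≤ p.mahlerMeasure := one_le_mahlerMeasure_of_one_le_norm_leadingCoeff <| by
    rw [(monic_prod_X_sub_C a univ).leadingCoeff, norm_one]
  have hML : p.mahlerMeasure ≤ L := by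
    simpa only [hdeg] using mahlerMeasure_le_sum_range_norm_coeff p
  have hLM : L ≤ 2 ^ n * p.mahlerMeasure := by
    simpa only [hdeg] using sum_range_norm_coeff_le_two_pow_mul_mahlerMeasure p
  have habs : ∑ i, |log ‖a i‖| = 2 * log p.mahlerMeasure := by
    rw [sum_abs_eq_two_mul_sum_max_zero hsum, log_mahlerMeasure_prod_X_sub_C]
    simp only [posLog_apply]
  constructor
  · calc 2 * √(2 / n) * max 0 (log ((2 ^ n)⁻¹ * L))
        ≤ 2 * √(2 / n) * log p.mahlerMeasure := by
          refine mul_le_mul_of_nonneg_left (max_le (log_nonneg hM1) (log_le_log ?_ ?_)) ?_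
          · exact mul_pos (by positivity) (by linarith)
          · rwa [inv_mul_le_iff₀ (by positivity)]
          · positivity
      _ = √(2 / Fintype.card (Fin n)) * ∑ i, |log ‖a i‖| := by
          rw [habs, Fintype.card_fin]; ring
      _ ≤ √(∑ i, 2 * log ‖a i‖ ^ 2) := sqrt_two_div_card_mul_sum_abs_le
  · calc √(∑ i, 2 * log ‖a i‖ ^ 2) ≤ ∑ i, |log ‖a i‖| := sqrt_sum_two_mul_sq_le_sum_abs hsum
      _ = 2 * log p.mahlerMeasure := habs
      _ ≤ 2 * log L := by gcongr

/-- Bounds on the translation length `ℓ(p) = √(∑ 2 (log |aᵢ|)²)` in terms of the length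
`L(p) = ∑ |coefficients|` of `p(X) = ∏ (X - aᵢ)` when `∏ aᵢ = 1`:
`2 √(2/n) max(0, log(2⁻ⁿ L(p))) ≤ ℓ(p) ≤ 2 log L(p)`. -/
theorem stmt_10 (n : ℕ) (hn : 2 ≤ n) (a : Fin n → ℂ) (ha : ∏ i, a i = 1) :
    2 * Real.sqrt (2 / n) *
      max 0 (Real.log (((2 : ℝ) ^ n)⁻¹ *
        ∑ j ∈ Finset.range (n + 1),
          ‖(∏ i, (X - C (a i))).coeff j‖)) ≤
      Real.sqrt (∑ i, 2 * (Real.log (‖a i‖)) ^ 2) ∧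
    Real.sqrt (∑ i, 2 * (Real.log (‖a i‖)) ^ 2) ≤
      2 * Real.log (∑ j ∈ Finset.range (n + 1),
        ‖(∏ i, (X - C (a i))).coeff j‖) :=
  stmt_10_general n a ha
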